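/- arXiv:1412.8279 — 2 statements merged into one kernel-verified Lean document; each statement's English description precedes it below -/
import Mathlib

section
/- Let A ∈ ℝ^{m×n}, L ∈ ℝ^{p×n}, W a matrix with ℛ(W) = 𝒩(L), and define L^# = (I - W(AW)†A)L†. If P satisfies PᵀP = I and ℛ(P) = ℛ(AW)^⊥, then PPᵀAL† = AL^#. -/
open Matrix

def IsMoorePenrose {m n : ℕ} (A : Matrix (Fin m) (Fin n) ℝ) (B : Matrix (Fin n) (Fin m) ℝ) : Prop :=
  A * B * A = A ∧ B * A * B = B ∧ (A * B)ᵀ = A * B ∧ (B * A)ᵀ = B * A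

theorem stmt5 {m n p k s : ℕ} (A : Matrix (Fin m) (Fin n) ℝ) (L : Matrix (Fin p) (Fin n) ℝ)
    (W : Matrix (Fin n) (Fin k) ℝ)
    (hW : Set.range W.mulVec = {x : Fin n → ℝ | L.mulVec x = 0})
    (Ld : Matrix (Fin n) (Fin p) ℝ) (hLd : IsMoorePenrose L Ld)
    (AWd : Matrix (Fin k) (Fin m) ℝ) (hAWd : IsMoorePenrose (A * W) AWd)
    (P : Matrix (Fin m) (Fin s) ℝ) (hP : Pᵀ * P = 1)
    (hPrange : Set.range P.mulVec =
      {v : Fin m → ℝ | ∀ u : Fin k → ℝ, v ⬝ᵥ (A * W).mulVec u = 0}) :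
    P * Pᵀ * A * Ld = A * ((1 - W * AWd * A) * Ld) := by
  set Q : Matrix (Fin m) (Fin m) ℝ := A * W * AWd with hQ
  have hQsym : Qᵀ = Q := hAWd.2.2.1
  have hQAW : Q * (A * W) = A * W := hAWd.1
  have hQQ : Q * Q = Q := by
    rw [hQ]
    calc A * W * AWd * (A * W * AWd) = (A * W * AWd * (A * W)) * AWd := by
          simp only [Matrix.mul_assoc]
      _ = A * W * AWd := by rw [hAWd.1]
  -- Q kills vectors orthogonal to the range of A*W
  have hQkill : ∀ v : Fin m → ℝ, (∀ u : Fin k → ℝ, v ⬝ᵥ (A * W).mulVec u = 0) →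
      Q.mulVec v = 0 := by
    intro v hv
    have hvQv : v ⬝ᵥ Q.mulVec v = 0 := by
      have : Q.mulVec v = (A * W).mulVec (AWd.mulVec v) := by
        rw [mulVec_mulVec, hQ]
      rw [this]
      exact hv _
    have hself : Q.mulVec v ⬝ᵥ Q.mulVec v = 0 := by
      calc Q.mulVec v ⬝ᵥ Q.mulVec v = (Qᵀ.mulVec v) ⬝ᵥ Q.mulVec v := by rw [hQsym]
        _ = (v ᵥ* Q) ⬝ᵥ Q.mulVec v := by rw [mulVec_transpose]
        _ = v ⬝ᵥ Q.mulVec (Q.mulVec v) := by rw [← dotProduct_mulVec]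
        _ = v ⬝ᵥ Q.mulVec v := by rw [mulVec_mulVec, hQQ]
        _ = 0 := hvQv
    exact dotProduct_self_eq_zero.mp hself
  -- Q * P = 0
  have hQP : Q * P = 0 := by
    ext i j
    have hmem : P.mulVec (Pi.single j 1) ∈ Set.range P.mulVec := ⟨_, rfl⟩
    rw [hPrange] at hmem
    have h0 := hQkill _ hmem
    rw [mulVec_mulVec] at h0
    have := congrFun h0 i
    simpa using this
  have hPtQ : Pᵀ * Q = 0 := by
    have h := congrArg Matrix.transpose hQP
    rwa [Matrix.transpose_mul, hQsym, Matrix.transpose_zero] at h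
  -- P * Pᵀ fixes (1 - Q) x
  have hfix : P * Pᵀ * (1 - Q) = 1 - Q := by
    ext i j
    have hx : ((1 - Q).mulVec (Pi.single j 1)) ∈
        {v : Fin m → ℝ | ∀ u : Fin k → ℝ, v ⬝ᵥ (A * W).mulVec u = 0} := by
      intro u
      have h1 : (1 - Q).mulVec (Pi.single j 1) =
          Pi.single j 1 - Q.mulVec (Pi.single j 1) := by
        rw [Matrix.sub_mulVec, Matrix.one_mulVec]
      rw [h1, sub_dotProduct]
      have h2 : Q.mulVec (Pi.single j 1) ⬝ᵥ (A * W).mulVec u =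
          Pi.single j 1 ⬝ᵥ (A * W).mulVec u := by
        calc Q.mulVec (Pi.single j 1) ⬝ᵥ (A * W).mulVec u
            = (Qᵀ.mulVec (Pi.single j 1)) ⬝ᵥ (A * W).mulVec u := by rw [hQsym]
          _ = ((Pi.single j 1) ᵥ* Q) ⬝ᵥ (A * W).mulVec u := by rw [mulVec_transpose]
          _ = Pi.single j 1 ⬝ᵥ Q.mulVec ((A * W).mulVec u) := by rw [← dotProduct_mulVec]
          _ = Pi.single j 1 ⬝ᵥ (A * W).mulVec u := by
              rw [mulVec_mulVec, hQAW]
      rw [h2, sub_self]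
    rw [← hPrange] at hx
    obtain ⟨y, hy⟩ := hx
    have key : (P * Pᵀ * (1 - Q)).mulVec (Pi.single j 1) =
        (1 - Q).mulVec (Pi.single j 1) := by
      rw [← mulVec_mulVec, ← hy, mulVec_mulVec, Matrix.mul_assoc P Pᵀ P, hP,
        Matrix.mul_one]
    have := congrFun key i
    simpa using this
  have hPPtQ : P * Pᵀ * Q = 0 := by rw [Matrix.mul_assoc, hPtQ, Matrix.mul_zero]
  have hPPt : P * Pᵀ = 1 - Q := by
    rw [Matrix.mul_sub, Matrix.mul_one, hPPtQ, sub_zero] at hfix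
    exact hfix
  rw [hQ] at hPPt
  rw [hPPt]
  simp [Matrix.sub_mul, Matrix.mul_sub, Matrix.mul_assoc]
end

section
/- Let Ṽ₁ ∈ ℝ^{n×l} have orthonormal columns and G ∈ ℝ^{l×l} be invertible, and let Δ ∈ ℝ^{l×l} be symmetric positive definite. Then the Moore-Penrose pseudoinverse satisfies (Ṽ₁ G^{-T} Δ G⁻¹ Ṽ₁ᵀ)† = Ṽ₁ G Δ⁻¹ Gᵀ Ṽ₁ᵀ. -/
open Matrix

theorem stmt16 {n l : ℕ}
    (V₁ : Matrix (Fin n) (Fin l) ℝ) (hV₁ : V₁ᵀ * V₁ = 1)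
    (G : Matrix (Fin l) (Fin l) ℝ) (hG : IsUnit G.det)
    (Δ : Matrix (Fin l) (Fin l) ℝ) (hΔ : Δ.PosDef) :
    IsMoorePenrose (V₁ * (G⁻¹)ᵀ * Δ * G⁻¹ * V₁ᵀ) (V₁ * G * Δ⁻¹ * Gᵀ * V₁ᵀ) := by
  have hd : IsUnit Δ.det := isUnit_iff_ne_zero.mpr (ne_of_gt hΔ.det_pos)
  have hΔt : Δᵀ = Δ := hΔ.1.eq
  have hV : ∀ (k : ℕ) (X : Matrix (Fin l) (Fin k) ℝ), V₁ᵀ * (V₁ * X) = X := by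
    intro k X; rw [← Matrix.mul_assoc, hV₁, Matrix.one_mul]
  have hG1 : ∀ (k : ℕ) (X : Matrix (Fin l) (Fin k) ℝ), G⁻¹ * (G * X) = X := by
    intro k X; rw [← Matrix.mul_assoc, Matrix.nonsing_inv_mul G hG, Matrix.one_mul]
  have hG2 : ∀ (k : ℕ) (X : Matrix (Fin l) (Fin k) ℝ), G * (G⁻¹ * X) = X := by
    intro k X; rw [← Matrix.mul_assoc, Matrix.mul_nonsing_inv G hG, Matrix.one_mul]
  have hGt : ∀ (k : ℕ) (X : Matrix (Fin l) (Fin k) ℝ), (G⁻¹)ᵀ * (Gᵀ * X) = X := by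
    intro k X; rw [← Matrix.mul_assoc, ← Matrix.transpose_mul,
      Matrix.mul_nonsing_inv G hG, Matrix.transpose_one, Matrix.one_mul]
  have hGt2 : ∀ (k : ℕ) (X : Matrix (Fin l) (Fin k) ℝ), Gᵀ * ((G⁻¹)ᵀ * X) = X := by
    intro k X; rw [← Matrix.mul_assoc, ← Matrix.transpose_mul,
      Matrix.nonsing_inv_mul G hG, Matrix.transpose_one, Matrix.one_mul]
  have hD1 : ∀ (k : ℕ) (X : Matrix (Fin l) (Fin k) ℝ), Δ⁻¹ * (Δ * X) = X := by
    intro k X; rw [← Matrix.mul_assoc, Matrix.nonsing_inv_mul Δ hd, Matrix.one_mul]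
  have hD2 : ∀ (k : ℕ) (X : Matrix (Fin l) (Fin k) ℝ), Δ * (Δ⁻¹ * X) = X := by
    intro k X; rw [← Matrix.mul_assoc, Matrix.mul_nonsing_inv Δ hd, Matrix.one_mul]
  have hAB : (V₁ * (G⁻¹)ᵀ * Δ * G⁻¹ * V₁ᵀ) * (V₁ * G * Δ⁻¹ * Gᵀ * V₁ᵀ) = V₁ * V₁ᵀ := by
    simp only [Matrix.mul_assoc, hV, hG1, hG2, hGt, hGt2, hD1, hD2]
  have hBA : (V₁ * G * Δ⁻¹ * Gᵀ * V₁ᵀ) * (V₁ * (G⁻¹)ᵀ * Δ * G⁻¹ * V₁ᵀ) = V₁ * V₁ᵀ := by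
    simp only [Matrix.mul_assoc, hV, hG1, hG2, hGt, hGt2, hD1, hD2]
  refine ⟨?_, ?_, ?_, ?_⟩
  · rw [hAB]; simp only [Matrix.mul_assoc, hV]
  · rw [hBA]; simp only [Matrix.mul_assoc, hV]
  · rw [hAB, Matrix.transpose_mul, Matrix.transpose_transpose]
  · rw [hBA, Matrix.transpose_mul, Matrix.transpose_transpose]
end
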